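/- arXiv:2512.06907 — 4 statements merged into one kernel-verified Lean document; each statement's English description precedes it below -/
import Mathlib

section
/- Let K be a field, let f be a homogeneous polynomial of degree d ≥ 1 in three variables over K, and let u, v ∈ K³ be linearly independent vectors. If the polynomial function (s, t) ↦ f(s·u + t·v) is not identically zero, then the set of points of the projective line through [u] and [v] at which f vanishes, i.e. the set of classes [s·u + t·v] ∈ ℙ²(K) with (s,t) ≠ (0,0) and f(s·u + t·v) = 0, has at most d elements. (This is the version of Bezout's theorem for auxiliary lines used repeatedly in the paper.) -/
open Polynomial in
lemma my_coeff_prod {K : Type*} [CommRing K] {ι : Type*} (s : Finset ι) (p : ι → K[X]) (n : ι → ℕ)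
    (h : ∀ i ∈ s, (p i).natDegree ≤ n i) :
    (∏ i ∈ s, p i).coeff (∑ i ∈ s, n i) = ∏ i ∈ s, (p i).coeff (n i) := by
  induction s using Finset.cons_induction with
  | empty => simp
  | cons a s ha ih =>
    rw [Finset.prod_cons, Finset.sum_cons,
      Polynomial.coeff_mul_add_eq_of_natDegree_le (h a (Finset.mem_cons_self a s))
        ((natDegree_prod_le _ _).trans
          (Finset.sum_le_sum fun i hi => h i (Finset.mem_cons_of_mem hi))),
      ih (fun i hi => h i (Finset.mem_cons_of_mem hi)), Finset.prod_cons]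

lemma my_degsum {K : Type*} [CommRing K] {σ : Type*} [Fintype σ] {f : MvPolynomial σ K} {d : ℕ}
    (hf : f.IsHomogeneous d) {m : σ →₀ ℕ} (hm : m ∈ f.support) : ∑ i, m i = d := by
  have := hf (MvPolynomial.mem_support_iff.mp hm)
  rw [← this]
  simp [Finsupp.weight_apply, Finsupp.sum_fintype]

lemma my_eval_smul {K : Type*} [CommRing K] {σ : Type*} [Fintype σ] {f : MvPolynomial σ K} {d : ℕ}
    (hf : f.IsHomogeneous d) (c : K) (x : σ → K) :
    MvPolynomial.eval (c • x) f = c ^ d * MvPolynomial.eval x f := by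
  conv_lhs => rw [f.as_sum]
  conv_rhs => rw [f.as_sum]
  rw [map_sum, map_sum, Finset.mul_sum]
  refine Finset.sum_congr rfl fun m hm => ?_
  rw [MvPolynomial.eval_monomial, MvPolynomial.eval_monomial,
    Finsupp.prod_fintype _ _ (fun i => pow_zero _), Finsupp.prod_fintype _ _ (fun i => pow_zero _)]
  simp only [Pi.smul_apply, smul_eq_mul, mul_pow]
  rw [Finset.prod_mul_distrib, Finset.prod_pow_eq_pow_sum, my_degsum hf hm]
  ring

open Polynomial in
noncomputable def linePoly {K : Type*} [Field K] (f : MvPolynomial (Fin 3) K) (u v : Fin 3 → K) :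
    K[X] :=
  MvPolynomial.aeval (fun i => C (u i) * X + C (v i)) f

open Polynomial in
lemma linePoly_eval {K : Type*} [Field K] (f : MvPolynomial (Fin 3) K) (u v : Fin 3 → K) (x : K) :
    (linePoly f u v).eval x = MvPolynomial.eval (x • u + v) f := by
  have h := MvPolynomial.eval₂_comp_left (Polynomial.evalRingHom x) (algebraMap K K[X])
    (fun i => C (u i) * X + C (v i)) f
  simp only [linePoly, MvPolynomial.aeval_def]
  show Polynomial.evalRingHom x _ = _
  rw [h]
  congr 1
  · ext a : 1; simp
  · ext i; simp [Pi.smul_apply, smul_eq_mul]; ring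

open Polynomial in
lemma linePoly_natDegree_le {K : Type*} [Field K] {f : MvPolynomial (Fin 3) K} {d : ℕ}
    (hf : f.IsHomogeneous d) (u v : Fin 3 → K) : (linePoly f u v).natDegree ≤ d := by
  rw [linePoly]
  conv_lhs => rw [f.as_sum]
  rw [map_sum]
  apply Polynomial.natDegree_sum_le_of_forall_le
  intro m hm
  rw [MvPolynomial.aeval_monomial, Finsupp.prod_fintype _ _ (fun i => pow_zero _)]
  refine (Polynomial.natDegree_mul_le).trans ?_
  have h1 : (algebraMap K K[X] (MvPolynomial.coeff m f)).natDegree = 0 := Polynomial.natDegree_C _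
  rw [h1, zero_add]
  refine (Polynomial.natDegree_prod_le _ _).trans ?_
  rw [← my_degsum hf hm]
  refine Finset.sum_le_sum fun i _ => ?_
  refine (Polynomial.natDegree_pow_le).trans ?_
  have : (C (u i) * X + C (v i)).natDegree ≤ 1 := by compute_degree
  calc m i * (C (u i) * X + C (v i)).natDegree ≤ m i * 1 := Nat.mul_le_mul_left _ this
  _ = m i := mul_one _

open Polynomial in
lemma linePoly_coeff {K : Type*} [Field K] {f : MvPolynomial (Fin 3) K} {d : ℕ}
    (hf : f.IsHomogeneous d) (u v : Fin 3 → K) :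
    (linePoly f u v).coeff d = MvPolynomial.eval u f := by
  rw [linePoly]
  conv_lhs => rw [f.as_sum]
  conv_rhs => rw [f.as_sum]
  rw [map_sum, map_sum, Polynomial.finset_sum_coeff]
  refine Finset.sum_congr rfl fun m hm => ?_
  rw [MvPolynomial.aeval_monomial, Finsupp.prod_fintype _ _ (fun i => pow_zero _),
    MvPolynomial.eval_monomial, Finsupp.prod_fintype _ _ (fun i => pow_zero _)]
  have halg : algebraMap K K[X] (MvPolynomial.coeff m f) = C (MvPolynomial.coeff m f) := rfl
  rw [halg, Polynomial.coeff_C_mul, ← my_degsum hf hm,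
    my_coeff_prod Finset.univ _ (fun i => m i) (fun i _ => by
      refine (Polynomial.natDegree_pow_le).trans ?_
      have : (C (u i) * X + C (v i)).natDegree ≤ 1 := by compute_degree
      calc m i * (C (u i) * X + C (v i)).natDegree ≤ m i * 1 := Nat.mul_le_mul_left _ this
      _ = m i := mul_one _)]
  congr 1
  refine Finset.prod_congr rfl fun i _ => ?_
  have hdeg : (C (u i) * X + C (v i)).natDegree ≤ 1 := by compute_degree
  have := Polynomial.coeff_pow_of_natDegree_le (p := C (u i) * X + C (v i)) (n := 1) (m := m i) hdeg
  rw [mul_one] at this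
  rw [this]
  simp

/-- Bezout's theorem for a line: if `f` is homogeneous of degree `d ≥ 1` over a
field `K`, `u` and `v` are linearly independent vectors of `K³`, and the
function `(s, t) ↦ f (s • u + t • v)` is not identically zero, then `f`
vanishes at no more than `d` points of the projective line through `[u]` and
`[v]`. -/
theorem bezout_for_line {K : Type*} [Field K]
    (f : MvPolynomial (Fin 3) K) (d : ℕ) (hd : 1 ≤ d)
    (hf : f.IsHomogeneous d) (u v : Fin 3 → K)
    (huv : LinearIndependent K ![u, v])
    (hnz : ¬ ∀ s t : K, MvPolynomial.eval (s • u + t • v) f = 0) :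
    {p : Projectivization K (Fin 3 → K) |
        ∃ (s t : K) (_ : (s, t) ≠ (0, 0)) (h : s • u + t • v ≠ 0),
          Projectivization.mk K (s • u + t • v) h = p ∧
          MvPolynomial.eval (s • u + t • v) f = 0}.Finite ∧
    {p : Projectivization K (Fin 3 → K) |
        ∃ (s t : K) (_ : (s, t) ≠ (0, 0)) (h : s • u + t • v ≠ 0),
          Projectivization.mk K (s • u + t • v) h = p ∧
          MvPolynomial.eval (s • u + t • v) f = 0}.ncard ≤ d := by
  classical
  obtain ⟨hv0, hau⟩ := linearIndependent_fin2.mp huv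
  simp only [Matrix.cons_val_one, Matrix.head_cons, Matrix.cons_val_zero] at hv0 hau
  have hu0 : u ≠ 0 := fun h => hau 0 (by simp [h])
  have hxv : ∀ x : K, x • u + v ≠ 0 := by
    intro x hx
    by_cases hx0 : x = 0
    · exact hv0 (by simpa [hx0] using hx)
    · refine hau (-x⁻¹) ?_
      have hvv : v = (-x) • u := by
        have := hx
        rw [add_eq_zero_iff_eq_neg] at this
        rw [neg_smul, this, neg_neg]
      rw [hvv, smul_smul]
      field_simp
      rw [one_smul]
  set P : Polynomial K := linePoly f u v with hP
  have hPne : P ≠ 0 := by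
    push_neg at hnz
    obtain ⟨s, t, hst⟩ := hnz
    by_cases ht : t = 0
    · subst ht
      rw [zero_smul, add_zero] at hst
      have h1 : MvPolynomial.eval (s • u) f = s ^ d * MvPolynomial.eval u f :=
        my_eval_smul hf s u
      have h2 : MvPolynomial.eval u f ≠ 0 := by
        intro h0
        rw [h0, mul_zero] at h1
        exact hst h1
      intro h0
      have := linePoly_coeff hf u v
      rw [← hP, h0] at this
      simp at this
      exact h2 this.symm
    · have hrep : s • u + t • v = t • ((s / t) • u + v) := by
        rw [smul_add, smul_smul, mul_div_cancel₀ _ ht]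
      rw [hrep, my_eval_smul hf] at hst
      intro h0
      apply hst
      rw [← linePoly_eval f u v (s / t), ← hP, h0]
      simp
  set ψ : K → Projectivization K (Fin 3 → K) :=
    fun x => Projectivization.mk K (x • u + v) (hxv x) with hψ
  set T : Finset (Projectivization K (Fin 3 → K)) :=
    P.roots.toFinset.image ψ ∪
      (if MvPolynomial.eval u f = 0 then {Projectivization.mk K u hu0} else ∅) with hT
  have hsub : {p : Projectivization K (Fin 3 → K) |
        ∃ (s t : K) (_ : (s, t) ≠ (0, 0)) (h : s • u + t • v ≠ 0),
          Projectivization.mk K (s • u + t • v) h = p ∧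
          MvPolynomial.eval (s • u + t • v) f = 0} ⊆ ↑T := by
    rintro p ⟨s, t, hst, h, rfl, hev⟩
    by_cases ht : t = 0
    · subst ht
      have hs : s ≠ 0 := by
        intro hs0
        exact hst (by simp [hs0])
      rw [zero_smul, add_zero] at hev
      have heu : MvPolynomial.eval u f = 0 := by
        rw [my_eval_smul hf s u] at hev
        exact (mul_eq_zero.mp hev).resolve_left (pow_ne_zero _ hs)
      apply Finset.mem_union_right
      rw [if_pos heu, Finset.mem_singleton]
      rw [Projectivization.mk_eq_mk_iff']
      exact ⟨s, by rw [zero_smul, add_zero]⟩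
    · apply Finset.mem_union_left
      have hrep : s • u + t • v = t • ((s / t) • u + v) := by
        rw [smul_add, smul_smul, mul_div_cancel₀ _ ht]
      have hroot : (s / t) ∈ P.roots.toFinset := by
        rw [Multiset.mem_toFinset, Polynomial.mem_roots hPne]
        show P.eval (s / t) = 0
        rw [hP, linePoly_eval]
        rw [hrep, my_eval_smul hf] at hev
        exact (mul_eq_zero.mp hev).resolve_left (pow_ne_zero _ ht)
      refine Finset.mem_image.mpr ⟨s / t, hroot, ?_⟩
      rw [hψ]
      rw [Projectivization.mk_eq_mk_iff']
      exact ⟨t⁻¹, by rw [hrep, smul_smul, inv_mul_cancel₀ ht, one_smul]⟩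
  have hcard : ∀ (n : ℕ), P.natDegree ≤ n → P.roots.toFinset.card ≤ n := fun n hn =>
    le_trans (Multiset.toFinset_card_le _) (le_trans (Polynomial.card_roots' P) hn)
  have hTcard : T.card ≤ d := by
    by_cases h0 : MvPolynomial.eval u f = 0
    · have hlt : P.natDegree < d := by
        rcases lt_or_eq_of_le (linePoly_natDegree_le hf u v) with h | h
        · exact h
        · exfalso
          apply hPne
          rw [← Polynomial.leadingCoeff_eq_zero, Polynomial.leadingCoeff, h]
          rw [hP, linePoly_coeff hf u v]
          exact h0
      calc T.card ≤ (P.roots.toFinset.image ψ).card +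
            (if MvPolynomial.eval u f = 0 then ({Projectivization.mk K u hu0} :
              Finset (Projectivization K (Fin 3 → K))) else ∅).card :=
            Finset.card_union_le _ _
        _ ≤ P.roots.toFinset.card + 1 := by
            refine add_le_add (Finset.card_image_le) ?_
            rw [if_pos h0]
            simp
        _ ≤ (d - 1) + 1 := Nat.add_le_add_right (hcard _ (Nat.le_sub_one_of_lt hlt)) 1
        _ = d := Nat.succ_pred_eq_of_pos hd
    · calc T.card ≤ (P.roots.toFinset.image ψ).card +
            (if MvPolynomial.eval u f = 0 then ({Projectivization.mk K u hu0} :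
              Finset (Projectivization K (Fin 3 → K))) else ∅).card :=
            Finset.card_union_le _ _
        _ ≤ P.roots.toFinset.card + 0 := by
            refine add_le_add (Finset.card_image_le) ?_
            rw [if_neg h0]
            simp
        _ ≤ d + 0 := Nat.add_le_add_right (hcard _ (linePoly_natDegree_le hf u v)) 0
        _ = d := add_zero d
  refine ⟨Set.Finite.subset T.finite_toSet hsub, ?_⟩
  refine le_trans ?_ hTcard
  rw [← Set.ncard_coe_finset]
  exact Set.ncard_le_ncard hsub T.finite_toSet
end

section
/- Let p₁, …, p₅ be five points of the real projective plane ℙ²(ℝ) such that no three of them are collinear. Then any two nonzero homogeneous polynomials of degree 2 in three variables over ℝ vanishing at all five points are scalar multiples of each other; equivalently, the ℝ-subspace of the space of homogeneous polynomials of degree 2 consisting of those vanishing at p₁, …, p₅ (together with 0) has dimension 1. (Uniqueness of the conic through five points in general position.) -/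
/-!
Evaluation of a homogeneous quadratic polynomial is a quadratic form `Q`. Take representatives
`b₀, b₁, b₂` of `p₀, p₁, p₂` as a basis of `ℝ³`; since `Q` vanishes on them,
`Q (∑ xᵢ • bᵢ) = x₀x₁ B₀₁ + x₀x₂ B₀₂ + x₁x₂ B₁₂`, where `B` is the polar form of `Q`. Vanishing
at `p₃` and `p₄` imposes two linear conditions on `(B₀₁, B₀₂, B₁₂)`, which general position
makes independent, so their solutions form a line, spanned by the cross product of the two
coefficient vectors.
-/

/-- `f` vanishes at the projective point `p`, i.e. `f` vanishes at every
representative vector of `p`. -/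
def ProjVanish {K : Type*} [Field K] (f : MvPolynomial (Fin 3) K)
    (p : Projectivization K (Fin 3 → K)) : Prop :=
  ∀ (v : Fin 3 → K) (hv : v ≠ 0), Projectivization.mk K v hv = p →
    MvPolynomial.eval v f = 0

open MvPolynomial Matrix

theorem ProjVanish.eval_rep {K : Type*} [Field K] {f : MvPolynomial (Fin 3) K}
    {p : Projectivization K (Fin 3 → K)} (h : ProjVanish f p) : eval p.rep f = 0 :=
  h _ p.rep_nonzero p.mk_rep

theorem MvPolynomial.IsHomogeneous.exists_quadraticMap_eval {σ R : Type*} [CommRing R]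
    {f : MvPolynomial σ R} (hf : f.IsHomogeneous 2) :
    ∃ Q : QuadraticMap R (σ → R) R, ∀ u, Q u = eval u f := by
  have hmem : f ∈ homogeneousSubmodule σ R 2 := hf
  rw [homogeneousSubmodule_eq_finsupp_supported, AddMonoidAlgebra.supported_eq_span_single]
    at hmem
  clear hf
  induction hmem using Submodule.span_induction with
  | mem x hx =>
    classical
    obtain ⟨d, hd, rfl⟩ := hx
    obtain ⟨i, j, hij⟩ := Multiset.card_eq_two.mp ((Finsupp.card_toMultiset d).trans hd)
    have hd_eq : d = Finsupp.single i 1 + Finsupp.single j 1 := by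
      rw [← Finsupp.toMultiset_toFinsupp d, hij, Multiset.insert_eq_cons,
        ← Multiset.singleton_add, map_add, Multiset.toFinsupp_singleton,
        Multiset.toFinsupp_singleton]
    refine ⟨QuadraticMap.linMulLin (LinearMap.proj i) (LinearMap.proj j), fun u => ?_⟩
    dsimp only
    rw [single_eq_monomial, hd_eq, monomial_add_single, ← X_pow_eq_monomial]
    simp
  | zero => exact ⟨0, by simp⟩
  | add x y _ _ hx hy =>
    obtain ⟨Qx, hx⟩ := hx
    obtain ⟨Qy, hy⟩ := hy
    exact ⟨Qx + Qy, by simp [hx, hy]⟩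
  | smul a x _ hx =>
    obtain ⟨Qx, hx⟩ := hx
    exact ⟨a • Qx, by simp [hx]⟩

def mixedMonomials {R : Type*} [CommRing R] (x : Fin 3 → R) : Fin 3 → R :=
  ![x 0 * x 1, x 0 * x 2, x 1 * x 2]

namespace QuadraticMap

variable {R M : Type*} [CommRing R] [AddCommGroup M] [Module R M]

def polarTriple (Q : QuadraticMap R M R) (v : Fin 3 → M) : Fin 3 → R :=
  ![polar Q (v 0) (v 1), polar Q (v 0) (v 2), polar Q (v 1) (v 2)]

theorem apply_eq_mixedMonomials_dotProduct (Q : QuadraticMap R M R)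
    (b : Module.Basis (Fin 3) R M) (hb : ∀ i, Q (b i) = 0) (u : M) :
    Q u = mixedMonomials (b.repr u) ⬝ᵥ polarTriple Q b := by
  conv_lhs => rw [← b.sum_repr u]
  simp only [Fin.sum_univ_three, QuadraticMap.map_add (⇑Q), polar_add_left, polar_smul_left,
    polar_smul_right, QuadraticMap.map_smul, hb, dotProduct, mixedMonomials, polarTriple,
    smul_eq_mul, mul_zero, add_zero, zero_add, cons_val_zero, cons_val_one, cons_val]
  ring

end QuadraticMap

theorem exists_eq_smul_of_dotProduct_eq_zero {F : Type*} [Field F] {a b x y : Fin 3 → F}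
    (hab : LinearIndependent F ![a, b]) (hx : x ≠ 0) (hxa : a ⬝ᵥ x = 0) (hxb : b ⬝ᵥ x = 0)
    (hya : a ⬝ᵥ y = 0) (hyb : b ⬝ᵥ y = 0) : ∃ c : F, y = c • x := by
  have hab' : a ⨯₃ b ≠ 0 := crossProduct_ne_zero_iff_linearIndependent.mpr hab
  have hker : ∀ z, a ⬝ᵥ z = 0 → b ⬝ᵥ z = 0 → ∃ t : F, t • (a ⨯₃ b) = z := by
    intro z hza hzb
    by_contra! h
    refine crossProduct_ne_zero_iff_linearIndependent.mpr
      ((LinearIndependent.pair_iff' hab').mpr h) ?_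
    rw [cross_cross_eq_smul_sub_smul, hza, hzb, zero_smul, zero_smul, sub_zero]
  obtain ⟨s, rfl⟩ := hker x hxa hxb
  obtain ⟨t, rfl⟩ := hker y hya hyb
  have hs : s ≠ 0 := by rintro rfl; simp at hx
  exact ⟨t / s, by rw [smul_smul, div_mul_cancel₀ _ hs]⟩

theorem not_linearIndependent_of_smul_add_smul_add_smul_eq_zero {R M : Type*} [Ring R]
    [AddCommGroup M] [Module R M] {x y z : M} {a b c : R} (hc : c ≠ 0)
    (h : a • x + b • y + c • z = 0) : ¬ LinearIndependent R ![x, y, z] := fun hli =>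
  hc (Fintype.linearIndependent_iff.mp hli ![a, b, c] (by simpa [Fin.sum_univ_three] using h) 2)

theorem linearIndependent_mixedMonomials_repr {K V : Type*} [Field K] [AddCommGroup V]
    [Module K V] {v : Fin 5 → V}
    (hv : ∀ i j k : Fin 5, i ≠ j → i ≠ k → j ≠ k → LinearIndependent K ![v i, v j, v k])
    (b : Module.Basis (Fin 3) K V) (hb : ⇑b = ![v 0, v 1, v 2]) :
    LinearIndependent K ![mixedMonomials (b.repr (v 3)), mixedMonomials (b.repr (v 4))] := by
  have hexpand (u : V) : u = b.repr u 0 • v 0 + b.repr u 1 • v 1 + b.repr u 2 • v 2 := by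
    simpa [hb, Fin.sum_univ_three] using (b.sum_repr u).symm
  set t := b.repr (v 3)
  set s := b.repr (v 4)
  have h3 : v 3 = t 0 • v 0 + t 1 • v 1 + t 2 • v 2 := hexpand (v 3)
  have h4 : v 4 = s 0 • v 0 + s 1 • v 1 + s 2 • v 2 := hexpand (v 4)
  have ht0 : t 0 ≠ 0 := fun h =>
    not_linearIndependent_of_smul_add_smul_add_smul_eq_zero (a := t 1) (b := t 2)
      (neg_ne_zero.mpr one_ne_zero) (by rw [h3, h]; module)
      (hv 1 2 3 (by decide) (by decide) (by decide))
  have ht2 : t 2 ≠ 0 := fun h =>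
    not_linearIndependent_of_smul_add_smul_add_smul_eq_zero (a := t 0) (b := t 1)
      (neg_ne_zero.mpr one_ne_zero) (by rw [h3, h]; module)
      (hv 0 1 3 (by decide) (by decide) (by decide))
  have hs2 : s 2 ≠ 0 := fun h =>
    not_linearIndependent_of_smul_add_smul_add_smul_eq_zero (a := s 0) (b := s 1)
      (neg_ne_zero.mpr one_ne_zero) (by rw [h4, h]; module)
      (hv 0 1 4 (by decide) (by decide) (by decide))
  have hts : t 0 * s 1 - t 1 * s 0 ≠ 0 := fun h =>
    not_linearIndependent_of_smul_add_smul_add_smul_eq_zero (a := s 2 * t 0 - s 0 * t 2)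
      (b := s 0) (neg_ne_zero.mpr ht0)
      (by rw [h3, h4]; linear_combination (norm := module) -(h • v 1))
      (hv 2 3 4 (by decide) (by decide) (by decide))
  rw [← crossProduct_ne_zero_iff_linearIndependent]
  intro h0
  -- The first coordinate of the cross product is `t₂ s₂ (t₀ s₁ - t₁ s₀)`.
  have h00 := congrFun h0 0
  simp only [mixedMonomials, cross_apply, cons_val_zero, cons_val_one, cons_val,
    Pi.zero_apply] at h00
  exact mul_ne_zero (mul_ne_zero ht2 hs2) hts (by linear_combination h00)

theorem QuadraticMap.exists_eq_smul_of_map_eq_zero {K V : Type*} [Field K] [AddCommGroup V]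
    [Module K V] {Q Q' : QuadraticMap K V K} (b : Module.Basis (Fin 3) K V) {y z : V}
    (hyz : LinearIndependent K ![mixedMonomials (b.repr y), mixedMonomials (b.repr z)])
    (hQ : Q ≠ 0) (hQb : ∀ i, Q (b i) = 0) (hQy : Q y = 0) (hQz : Q z = 0)
    (hQ'b : ∀ i, Q' (b i) = 0) (hQ'y : Q' y = 0) (hQ'z : Q' z = 0) : ∃ c : K, Q' = c • Q := by
  have hQ_eq := Q.apply_eq_mixedMonomials_dotProduct b hQb
  have hQ'_eq := Q'.apply_eq_mixedMonomials_dotProduct b hQ'b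
  have hQ0 : Q.polarTriple b ≠ 0 := fun h => hQ (QuadraticMap.ext fun u => by
    rw [hQ_eq, h, dotProduct_zero]; rfl)
  obtain ⟨c, hc⟩ := exists_eq_smul_of_dotProduct_eq_zero hyz hQ0
    (by rw [← hQ_eq, hQy]) (by rw [← hQ_eq, hQz])
    (by rw [← hQ'_eq, hQ'y]) (by rw [← hQ'_eq, hQ'z])
  exact ⟨c, QuadraticMap.ext fun u => by rw [hQ'_eq, hc, dotProduct_smul, ← hQ_eq]; rfl⟩

theorem conic_through_five_general_points_unique_general
    (p : Fin 5 → Projectivization ℝ (Fin 3 → ℝ))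
    (hgen : ∀ i j k : Fin 5, i ≠ j → i ≠ k → j ≠ k →
      LinearIndependent ℝ ![(p i).rep, (p j).rep, (p k).rep])
    (f g : MvPolynomial (Fin 3) ℝ)
    (hf0 : f ≠ 0) (hf : f.IsHomogeneous 2) (hfv : ∀ i : Fin 5, ProjVanish f (p i))
    (hg : g.IsHomogeneous 2) (hgv : ∀ i : Fin 5, ProjVanish g (p i)) :
    ∃ c : ℝ, g = c • f := by
  have hli := hgen 0 1 2 (by decide) (by decide) (by decide)
  let b := basisOfLinearIndependentOfCardEqFinrank hli (by simp)
  have hb : ⇑b = ![(p 0).rep, (p 1).rep, (p 2).rep] :=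
    coe_basisOfLinearIndependentOfCardEqFinrank hli _
  obtain ⟨Qf, hQf⟩ := hf.exists_quadraticMap_eval
  obtain ⟨Qg, hQg⟩ := hg.exists_quadraticMap_eval
  have hQf_rep (i : Fin 5) : Qf (p i).rep = 0 := (hQf _).trans (hfv i).eval_rep
  have hQg_rep (i : Fin 5) : Qg (p i).rep = 0 := (hQg _).trans (hgv i).eval_rep
  obtain ⟨c, hc⟩ := QuadraticMap.exists_eq_smul_of_map_eq_zero b
    (linearIndependent_mixedMonomials_repr hgen b hb)
    (fun h => hf0 (MvPolynomial.funext fun u => by rw [← hQf, h]; simp))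
    (by simp [hb, Fin.forall_fin_succ, hQf_rep]) (hQf_rep 3) (hQf_rep 4)
    (by simp [hb, Fin.forall_fin_succ, hQg_rep]) (hQg_rep 3) (hQg_rep 4)
  exact ⟨c, MvPolynomial.funext fun u => by rw [← hQg, hc, smul_eval, ← hQf]; rfl⟩

/-- If `p₁, …, p₅` are five points of the real projective plane no three of
which are collinear, then any two nonzero homogeneous polynomials of degree 2
in three variables over ℝ vanishing at all five points are scalar multiples of
each other: the conic through five points in general position is unique. -/
theorem conic_through_five_general_points_unique
    (p : Fin 5 → Projectivization ℝ (Fin 3 → ℝ))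
    (hgen : ∀ i j k : Fin 5, i ≠ j → i ≠ k → j ≠ k →
      LinearIndependent ℝ ![(p i).rep, (p j).rep, (p k).rep])
    (f g : MvPolynomial (Fin 3) ℝ)
    (hf0 : f ≠ 0) (hf : f.IsHomogeneous 2) (hfv : ∀ i : Fin 5, ProjVanish f (p i))
    (hg0 : g ≠ 0) (hg : g.IsHomogeneous 2) (hgv : ∀ i : Fin 5, ProjVanish g (p i)) :
    ∃ c : ℝ, g = c • f :=
  conic_through_five_general_points_unique_general p hgen f g hf0 hf hfv hg hgv
end

section
/- Let p₁, p₂, p₃, p₄ be four points of the real projective plane ℙ²(ℝ) such that no three of them are collinear. Then the ℝ-subspace of the space of homogeneous polynomials of degree 2 in three variables over ℝ consisting of those vanishing at all four points (together with 0) has dimension exactly 2. (This is the pencil of conics through four points used in the constructions of Section 1, Fig. 4.) -/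
/-- The ℝ-subspace of `MvPolynomial (Fin 3) ℝ` consisting of the homogeneous
polynomials of degree 2 (together with 0) vanishing at each of the given
projective points. -/
noncomputable def conicsThrough {n : ℕ} (p : Fin n → Projectivization ℝ (Fin 3 → ℝ)) :
    Submodule ℝ (MvPolynomial (Fin 3) ℝ) where
  carrier := {f | f.IsHomogeneous 2 ∧ ∀ i, ProjVanish f (p i)}
  zero_mem' := ⟨MvPolynomial.isHomogeneous_zero _ _ _,
    fun _ _ _ _ => by simp⟩
  add_mem' := fun hf hg => ⟨hf.1.add hg.1,
    fun i v hv hp => by simp [hf.2 i v hv hp, hg.2 i v hv hp]⟩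
  smul_mem' := fun c f hf => ⟨by
      rw [MvPolynomial.smul_eq_C_mul]
      simpa using (MvPolynomial.isHomogeneous_C (Fin 3) c).mul hf.1,
    fun i v hv hp => by simp [MvPolynomial.smul_eq_C_mul, hf.2 i v hv hp]⟩

open MvPolynomial Matrix

namespace ConicsAux

lemma finsupp_degree_eq (d : Fin 3 →₀ ℕ) : d.degree = d 0 + d 1 + d 2 := by
  have h : ∑ i ∈ d.support, d i = ∑ i : Fin 3, d i :=
    Finset.sum_subset (Finset.subset_univ _)
      (fun i _ hi => Finsupp.notMem_support_iff.mp hi)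
  rw [Finsupp.degree_apply, h, Fin.sum_univ_three]

lemma isHom_degree {f : MvPolynomial (Fin 3) ℝ} (hf : f.IsHomogeneous 2)
    {d : Fin 3 →₀ ℕ} (hd : coeff d f ≠ 0) : d.degree = 2 := by
  by_contra h
  exact hd (hf.coeff_eq_zero h)

lemma eval_smul_pow {f : MvPolynomial (Fin 3) ℝ} (hf : f.IsHomogeneous 2)
    (c : ℝ) (v : Fin 3 → ℝ) : eval (c • v) f = c ^ 2 * eval v f := by
  rw [eval_eq', eval_eq', Finset.mul_sum]
  refine Finset.sum_congr rfl fun d hd => ?_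
  have hdeg : d 0 + d 1 + d 2 = 2 := by
    rw [← finsupp_degree_eq]; exact isHom_degree hf (mem_support_iff.mp hd)
  have hprod : ∏ i, (c • v) i ^ d i = c ^ 2 * ∏ i, v i ^ d i := by
    simp only [Pi.smul_apply, smul_eq_mul, mul_pow]
    rw [Finset.prod_mul_distrib, Finset.prod_pow_eq_pow_sum, Fin.sum_univ_three, hdeg]
  rw [hprod]; ring

lemma projVanish_iff {f : MvPolynomial (Fin 3) ℝ} (hf : f.IsHomogeneous 2)
    (q : Projectivization ℝ (Fin 3 → ℝ)) :
    ProjVanish f q ↔ eval q.rep f = 0 := by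
  constructor
  · intro h; exact h q.rep q.rep_nonzero q.mk_rep
  · intro h v hv hq
    obtain ⟨a, ha⟩ := (Projectivization.mk_eq_mk_iff ℝ v q.rep hv q.rep_nonzero).mp
      (by rw [hq, q.mk_rep])
    rw [← ha, Units.smul_def, eval_smul_pow hf, h, mul_zero]

lemma mem_conicsThrough_iff {n : ℕ} (p : Fin n → Projectivization ℝ (Fin 3 → ℝ))
    (f : MvPolynomial (Fin 3) ℝ) :
    f ∈ conicsThrough p ↔ f.IsHomogeneous 2 ∧ ∀ i, eval (p i).rep f = 0 := by
  constructor
  · rintro ⟨h1, h2⟩; exact ⟨h1, fun i => (projVanish_iff h1 _).mp (h2 i)⟩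
  · rintro ⟨h1, h2⟩; exact ⟨h1, fun i => (projVanish_iff h1 _).mpr (h2 i)⟩

noncomputable def D : Fin 6 → (Fin 3 →₀ ℕ) :=
  ![Finsupp.single 0 2, Finsupp.single 1 2, Finsupp.single 2 2,
    Finsupp.single 0 1 + Finsupp.single 1 1, Finsupp.single 0 1 + Finsupp.single 2 1,
    Finsupp.single 1 1 + Finsupp.single 2 1]

lemma D0 : D 0 = Finsupp.single 0 2 := rfl
lemma D1 : D 1 = Finsupp.single 1 2 := rfl
lemma D2 : D 2 = Finsupp.single 2 2 := rfl
lemma D3 : D 3 = Finsupp.single 0 1 + Finsupp.single 1 1 := rfl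
lemma D4 : D 4 = Finsupp.single 0 1 + Finsupp.single 2 1 := rfl
lemma D5 : D 5 = Finsupp.single 1 1 + Finsupp.single 2 1 := rfl

def vals : Fin 6 → ℕ × ℕ × ℕ :=
  ![(2,0,0), (0,2,0), (0,0,2), (1,1,0), (1,0,1), (0,1,1)]

lemma Dv (j : Fin 6) : ((D j) 0, (D j) 1, (D j) 2) = vals j := by
  have e0 : ((D 0) 0, (D 0) 1, (D 0) 2) = ((2:ℕ), (0:ℕ), (0:ℕ)) := by
    rw [D0]; simp [Finsupp.single_apply]
  have e1 : ((D 1) 0, (D 1) 1, (D 1) 2) = ((0:ℕ), (2:ℕ), (0:ℕ)) := by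
    rw [D1]; simp [Finsupp.single_apply]
  have e2 : ((D 2) 0, (D 2) 1, (D 2) 2) = ((0:ℕ), (0:ℕ), (2:ℕ)) := by
    rw [D2]; simp [Finsupp.single_apply]
  have e3 : ((D 3) 0, (D 3) 1, (D 3) 2) = ((1:ℕ), (1:ℕ), (0:ℕ)) := by
    rw [D3]; simp [Finsupp.single_apply]
  have e4 : ((D 4) 0, (D 4) 1, (D 4) 2) = ((1:ℕ), (0:ℕ), (1:ℕ)) := by
    rw [D4]; simp [Finsupp.single_apply]
  have e5 : ((D 5) 0, (D 5) 1, (D 5) 2) = ((0:ℕ), (1:ℕ), (1:ℕ)) := by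
    rw [D5]; simp [Finsupp.single_apply]
  fin_cases j
  exacts [e0, e1, e2, e3, e4, e5]

lemma D_degree (j : Fin 6) : (D j).degree = 2 := by
  rw [finsupp_degree_eq]
  have h0 := congrArg (fun t : ℕ × ℕ × ℕ => t.1) (Dv j)
  have h1 := congrArg (fun t : ℕ × ℕ × ℕ => t.2.1) (Dv j)
  have h2 := congrArg (fun t : ℕ × ℕ × ℕ => t.2.2) (Dv j)
  simp only at h0 h1 h2
  rw [h0, h1, h2]
  fin_cases j <;> rfl

lemma D_inj : Function.Injective D := by
  intro a b h
  have hv : vals a = vals b := by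
    rw [← Dv a, ← Dv b, h]
  fin_cases a <;> fin_cases b <;> first | rfl | exact absurd hv (by decide)

lemma exists_D {d : Fin 3 →₀ ℕ} (h : d 0 + d 1 + d 2 = 2) : ∃ j, d = D j := by
  have h6 : (d 0 = 2 ∧ d 1 = 0 ∧ d 2 = 0) ∨ (d 0 = 0 ∧ d 1 = 2 ∧ d 2 = 0) ∨
      (d 0 = 0 ∧ d 1 = 0 ∧ d 2 = 2) ∨ (d 0 = 1 ∧ d 1 = 1 ∧ d 2 = 0) ∨
      (d 0 = 1 ∧ d 1 = 0 ∧ d 2 = 1) ∨ (d 0 = 0 ∧ d 1 = 1 ∧ d 2 = 1) := by omega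
  have hext : ∀ e : Fin 3 →₀ ℕ, d 0 = e 0 → d 1 = e 1 → d 2 = e 2 → d = e := by
    intro e h0 h1 h2; ext i; fin_cases i <;> assumption
  rcases h6 with ⟨a, b, c⟩ | ⟨a, b, c⟩ | ⟨a, b, c⟩ | ⟨a, b, c⟩ | ⟨a, b, c⟩ | ⟨a, b, c⟩
  · exact ⟨0, hext _ (by rw [D0]; simp [Finsupp.single_apply, a])
      (by rw [D0]; simp [Finsupp.single_apply, b]) (by rw [D0]; simp [Finsupp.single_apply, c])⟩
  · exact ⟨1, hext _ (by rw [D1]; simp [Finsupp.single_apply, a])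
      (by rw [D1]; simp [Finsupp.single_apply, b]) (by rw [D1]; simp [Finsupp.single_apply, c])⟩
  · exact ⟨2, hext _ (by rw [D2]; simp [Finsupp.single_apply, a])
      (by rw [D2]; simp [Finsupp.single_apply, b]) (by rw [D2]; simp [Finsupp.single_apply, c])⟩
  · exact ⟨3, hext _ (by rw [D3]; simp [Finsupp.single_apply, a])
      (by rw [D3]; simp [Finsupp.single_apply, b]) (by rw [D3]; simp [Finsupp.single_apply, c])⟩
  · exact ⟨4, hext _ (by rw [D4]; simp [Finsupp.single_apply, a])
      (by rw [D4]; simp [Finsupp.single_apply, b]) (by rw [D4]; simp [Finsupp.single_apply, c])⟩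
  · exact ⟨5, hext _ (by rw [D5]; simp [Finsupp.single_apply, a])
      (by rw [D5]; simp [Finsupp.single_apply, b]) (by rw [D5]; simp [Finsupp.single_apply, c])⟩

lemma homog_eq_span :
    homogeneousSubmodule (Fin 3) ℝ 2 =
      Submodule.span ℝ (Set.range fun j => (monomial (D j) (1 : ℝ))) := by
  apply le_antisymm
  · intro f hf
    rw [mem_homogeneousSubmodule] at hf
    nth_rewrite 1 [f.as_sum]
    apply Submodule.sum_mem
    intro d hd
    have hdeg : d 0 + d 1 + d 2 = 2 := by
      rw [← finsupp_degree_eq]; exact isHom_degree hf (mem_support_iff.mp hd)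
    obtain ⟨j, rfl⟩ := exists_D hdeg
    have : (monomial (D j) (coeff (D j) f)) = (coeff (D j) f) • monomial (D j) (1 : ℝ) := by
      rw [smul_monomial, smul_eq_mul, mul_one]
    rw [this]
    exact Submodule.smul_mem _ _ (Submodule.subset_span ⟨j, rfl⟩)
  · rw [Submodule.span_le]
    rintro _ ⟨j, rfl⟩
    rw [SetLike.mem_coe, mem_homogeneousSubmodule]
    exact isHomogeneous_monomial _ (D_degree j)

lemma li_monomials : LinearIndependent ℝ (fun j => (monomial (D j) (1 : ℝ))) := by
  have h := (basisMonomials (Fin 3) ℝ).linearIndependent.comp D D_inj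
  have hco : (⇑(basisMonomials (Fin 3) ℝ) ∘ D) = fun j => (monomial (D j) (1 : ℝ)) := by
    funext j; simp [coe_basisMonomials]
  rwa [hco] at h

lemma finrank_H : Module.finrank ℝ (homogeneousSubmodule (Fin 3) ℝ 2) = 6 := by
  rw [homog_eq_span, finrank_span_eq_card li_monomials, Fintype.card_fin]

lemma fd_H : FiniteDimensional ℝ (homogeneousSubmodule (Fin 3) ℝ 2) := by
  rw [homog_eq_span]
  exact FiniteDimensional.span_of_finite ℝ (Set.finite_range _)

end ConicsAux

open ConicsAux

set_option synthInstance.maxHeartbeats 1000000 in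
set_option maxHeartbeats 2000000 in
/-- The pencil of conics: for four points of the real projective plane no three
of which are collinear, the space of degree-2 homogeneous polynomials vanishing
at all four points has dimension exactly 2. -/
theorem conics_through_four_general_points_dim_two
    (p : Fin 4 → Projectivization ℝ (Fin 3 → ℝ))
    (hgen : ∀ i j k : Fin 4, i ≠ j → i ≠ k → j ≠ k →
      LinearIndependent ℝ ![(p i).rep, (p j).rep, (p k).rep]) :
    Module.finrank ℝ (conicsThrough p) = 2 := by
  classical
  set w : Fin 4 → (Fin 3 → ℝ) := fun i => (p i).rep with hw
  set H := homogeneousSubmodule (Fin 3) ℝ 2 with hH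
  have hfd : FiniteDimensional ℝ H := fd_H
  let E : H →ₗ[ℝ] (Fin 4 → ℝ) :=
    { toFun := fun f i => eval (w i) (f : MvPolynomial (Fin 3) ℝ)
      map_add' := fun f g => by funext i; simp
      map_smul' := fun c f => by funext i; simp }
  have hdet : ∀ i j k : Fin 4, i ≠ j → i ≠ k → j ≠ k →
      Matrix.det ![w i, w j, w k] ≠ 0 := by
    intro i j k hij hik hjk
    have h := hgen i j k hij hik hjk
    have hu : IsUnit (Matrix.of ![w i, w j, w k]) :=
      Matrix.linearIndependent_rows_iff_isUnit.mp h
    exact ((Matrix.isUnit_iff_isUnit_det _).mp hu).ne_zero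
  let L : Fin 4 → Fin 4 → MvPolynomial (Fin 3) ℝ := fun a b =>
    ∑ t, MvPolynomial.C ((crossProduct (w a) (w b)) t) * MvPolynomial.X t
  have hLeval : ∀ a b v, eval v (L a b) = Matrix.det ![v, w a, w b] := by
    intro a b v
    rw [← triple_product_eq_det]
    simp [L, dotProduct, mul_comm]
  have hLhom : ∀ a b, (L a b).IsHomogeneous 1 := fun a b =>
    MvPolynomial.IsHomogeneous.sum _ _ _ (fun t _ => isHomogeneous_C_mul_X _ t)
  have key : ∀ i : Fin 4, ∃ c : ℝ, c ≠ 0 ∧ (Pi.single i c : Fin 4 → ℝ) ∈ LinearMap.range E := by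
    intro i
    set j := i.succAbove 0 with hj
    set k := i.succAbove 1 with hk
    set l := i.succAbove 2 with hl
    have hji : j ≠ i := Fin.succAbove_ne i 0
    have hki : k ≠ i := Fin.succAbove_ne i 1
    have hli : l ≠ i := Fin.succAbove_ne i 2
    have hjk : j ≠ k := by
      simp only [hj, hk, ne_eq, Fin.succAbove_right_inj]; decide
    have hjl : j ≠ l := by
      simp only [hj, hl, ne_eq, Fin.succAbove_right_inj]; decide
    have hkl : k ≠ l := by
      simp only [hk, hl, ne_eq, Fin.succAbove_right_inj]; decide
    have hfhom : (L j k * L j l).IsHomogeneous 2 := (hLhom j k).mul (hLhom j l)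
    refine ⟨Matrix.det ![w i, w j, w k] * Matrix.det ![w i, w j, w l],
      mul_ne_zero (hdet i j k hji.symm hki.symm hjk)
        (hdet i j l hji.symm hli.symm hjl),
      ⟨L j k * L j l, (mem_homogeneousSubmodule _ _).mpr hfhom⟩, ?_⟩
    funext t
    show eval (w t) (L j k * L j l) = _
    rw [_root_.map_mul, hLeval, hLeval]
    by_cases hti : t = i
    · subst hti; rw [Pi.single_eq_same]
    · rw [Pi.single_eq_of_ne hti]
      obtain ⟨s, rfl⟩ := Fin.exists_succAbove_eq (Ne.symm (Ne.symm hti))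
      fin_cases s
      · have h1 : Matrix.det ![w j, w j, w k] = 0 :=
          Matrix.det_zero_of_row_eq (by decide : (0 : Fin 3) ≠ 1) rfl
        exact mul_eq_zero_of_left h1 _
      · have h1 : Matrix.det ![w k, w j, w k] = 0 :=
          Matrix.det_zero_of_row_eq (by decide : (0 : Fin 3) ≠ 2) rfl
        exact mul_eq_zero_of_left h1 _
      · have h1 : Matrix.det ![w l, w j, w l] = 0 :=
          Matrix.det_zero_of_row_eq (by decide : (0 : Fin 3) ≠ 2) rfl
        exact mul_eq_zero_of_right _ h1
  have hrange : LinearMap.range E = ⊤ := by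
    rw [eq_top_iff]
    intro x _
    have hx : x = ∑ i, (Pi.single i (x i) : Fin 4 → ℝ) := by
      funext t
      rw [Finset.sum_apply]
      exact (Fintype.sum_pi_single t x).symm
    rw [hx]
    apply Submodule.sum_mem
    intro i _
    obtain ⟨c, hc, hmem⟩ := key i
    have hsingle : (Pi.single i (x i) : Fin 4 → ℝ) = (x i / c) • (Pi.single i c : Fin 4 → ℝ) := by
      funext t
      by_cases h : t = i
      · subst h; rw [Pi.smul_apply, Pi.single_eq_same, Pi.single_eq_same, smul_eq_mul]
        field_simp
      · rw [Pi.smul_apply, Pi.single_eq_of_ne h, Pi.single_eq_of_ne h, smul_eq_mul, mul_zero]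
    rw [hsingle]
    exact Submodule.smul_mem _ _ hmem
  have hker : Module.finrank ℝ (LinearMap.ker E) = 2 := by
    have h1 := E.finrank_range_add_finrank_ker
    rw [hrange, finrank_top] at h1
    rw [Module.finrank_fin_fun ℝ] at h1
    have h2 : Module.finrank ℝ H = 6 := finrank_H
    omega
  have hmap : conicsThrough p = (LinearMap.ker E).map H.subtype := by
    ext f
    rw [mem_conicsThrough_iff]
    constructor
    · rintro ⟨h1, h2⟩
      refine ⟨⟨f, (mem_homogeneousSubmodule _ _).mpr h1⟩, ?_, rfl⟩
      rw [SetLike.mem_coe, LinearMap.mem_ker]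
      funext i
      simpa [E, hw] using h2 i
    · rintro ⟨⟨g, hg⟩, hk, rfl⟩
      rw [SetLike.mem_coe, LinearMap.mem_ker] at hk
      refine ⟨(mem_homogeneousSubmodule _ _).mp hg, fun i => ?_⟩
      simpa [E, hw] using congrFun hk i
  rw [hmap, Submodule.finrank_map_subtype_eq]
  exact hker
end

section
/- Let f and g be homogeneous polynomials in three variables over ℝ of degrees m ≥ 1 and n ≥ 1 respectively, and suppose f and g have no common nonconstant factor in `MvPolynomial (Fin 3) ℝ` (i.e. every polynomial dividing both f and g is a unit). Then the set of common zeros of f and g in the real projective plane ℙ²(ℝ) is finite and has at most m·n elements. (This is the form of Bezout's theorem used throughout the paper, e.g. to show that the conic C₂ meets the degree-k curve C_k in at most 2k real points.) -/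
open MvPolynomial Module
noncomputable section
namespace BezoutAux



lemma degree_eq_card (d : Fin 3 →₀ ℕ) : d.degree = Multiset.card (Finsupp.toMultiset d) := by
  rw [Finsupp.card_toMultiset]; simp [Finsupp.degree_apply, Finsupp.sum]

def degEquivSym (e : ℕ) : {d : Fin 3 →₀ ℕ // d.degree = e} ≃ Sym (Fin 3) e where
  toFun d := ⟨Finsupp.toMultiset d.1, by rw [← degree_eq_card]; exact d.2⟩
  invFun s := ⟨Multiset.toFinsupp s.1, by
    rw [degree_eq_card, Multiset.toFinsupp_toMultiset]; exact s.2⟩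
  left_inv d := by ext : 1; simp
  right_inv s := by ext : 1; simp

instance (e : ℕ) : Fintype {d : Fin 3 →₀ ℕ // d.degree = e} := Fintype.ofEquiv _ (degEquivSym e).symm

lemma card_deg (e : ℕ) : Fintype.card {d : Fin 3 →₀ ℕ // d.degree = e} = (e+2).choose e := by
  rw [Fintype.card_congr (degEquivSym e), Sym.card_sym_eq_choose]
  congr 1
  simp [Fintype.card_fin]
  omega

open Classical in
def Seq (e : ℕ) : (MvPolynomial.homogeneousSubmodule (Fin 3) ℝ e) ≃ₗ[ℝ] ({d : Fin 3 →₀ ℕ // d.degree = e} →₀ ℝ) := by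
  have h := MvPolynomial.homogeneousSubmodule_eq_finsupp_supported (Fin 3) ℝ e
  exact (LinearEquiv.ofEq _ _ h).trans (AddMonoidAlgebra.supportedEquivFinsupp (R := ℝ) (S := ℝ) _)

instance (e : ℕ) : FiniteDimensional ℝ (MvPolynomial.homogeneousSubmodule (Fin 3) ℝ e) :=
  Module.Finite.equiv (Seq e).symm

lemma finrank_homog (e : ℕ) :
    Module.finrank ℝ (MvPolynomial.homogeneousSubmodule (Fin 3) ℝ e) = (e+2).choose e := by
  rw [(Seq e).finrank_eq, Module.finrank_finsupp_self, card_deg]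


lemma isHomogeneous_of_mul_left {f c : MvPolynomial (Fin 3) ℝ} {m k : ℕ}
    (hf : f.IsHomogeneous m) (hfc : (f * c).IsHomogeneous (m + k)) (hf0 : f ≠ 0) (hc0 : c ≠ 0) :
    c.IsHomogeneous k := by
  have key : ∀ j, j ≠ k → homogeneousComponent j c = 0 := by
    intro j hj
    by_cases hjt : c.totalDegree < j
    · exact homogeneousComponent_eq_zero _ _ hjt
    push_neg at hjt
    have h2 : homogeneousComponent (m + j) (f * c) = 0 := by
      rw [homogeneousComponent_of_mem (m := m + j) (n := m + k) ((mem_homogeneousSubmodule _ _).2 hfc),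
        if_neg (by omega)]
    have h1 : homogeneousComponent (m + j) (f * c) = f * homogeneousComponent j c := by
      conv_lhs => rw [← sum_homogeneousComponent c]
      rw [Finset.mul_sum, map_sum, Finset.sum_eq_single j]
      · rw [homogeneousComponent_of_mem (m := m + j) (n := m + j) ((mem_homogeneousSubmodule _ _).2
          (hf.mul (homogeneousComponent_isHomogeneous j c))), if_pos rfl]
      · intro i _ hij
        rw [homogeneousComponent_of_mem (m := m + j) (n := m + i) ((mem_homogeneousSubmodule _ _).2
          (hf.mul (homogeneousComponent_isHomogeneous i c))), if_neg (by omega)]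
      · intro hjr
        exact absurd (Finset.mem_range.2 (by omega)) hjr
    have := h1.symm.trans h2
    rcases mul_eq_zero.1 this with h | h
    · exact absurd h hf0
    · exact h
  by_cases hk : c.totalDegree < k
  · exfalso
    apply hc0
    rw [← sum_homogeneousComponent c]
    apply Finset.sum_eq_zero
    intro i hi
    exact key i (by rw [Finset.mem_range] at hi; omega)
  · have hck : c = homogeneousComponent k c := by
      conv_lhs => rw [← sum_homogeneousComponent c]
      refine Finset.sum_eq_single k (fun i _ hik => key i hik) ?_
      intro hkr
      exact absurd (Finset.mem_range.2 (by omega)) hkr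
    rw [hck]
    exact homogeneousComponent_isHomogeneous k c


def dot (u v : Fin 3 → ℝ) : ℝ := ∑ t, u t * v t

def linf (w : Fin 3 → ℝ) : MvPolynomial (Fin 3) ℝ := ∑ t, C (w t) * X t

lemma eval_linf (w v : Fin 3 → ℝ) : eval v (linf w) = dot w v := by
  simp [linf, dot]

lemma linf_isHomogeneous (w : Fin 3 → ℝ) : (linf w).IsHomogeneous 1 :=
  IsHomogeneous.sum _ _ _ (fun t _ => isHomogeneous_C_mul_X _ _)

lemma dot_single (l : Fin 3) (a : ℝ) (x : Fin 3 → ℝ) : dot (Pi.single l a) x = a * x l := by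
  simp [dot, Pi.single_apply, Finset.sum_ite_eq' Finset.univ l fun t => a * x t]

lemma dot_sub (u u' x : Fin 3 → ℝ) : dot (u - u') x = dot u x - dot u' x := by
  simp [dot, Finset.sum_sub_distrib, sub_mul]

lemma dot_self_pos {v : Fin 3 → ℝ} (hv : v ≠ 0) : 0 < dot v v := by
  obtain ⟨t, ht⟩ : ∃ t, v t ≠ 0 := by
    by_contra hc; push_neg at hc; exact hv (funext hc)
  exact Finset.sum_pos' (fun t _ => mul_self_nonneg _)
    ⟨t, Finset.mem_univ t, mul_self_pos.2 ht⟩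

lemma sep {v w : Fin 3 → ℝ} (hv : v ≠ 0) (hw : w ≠ 0)
    (hne : Projectivization.mk ℝ v hv ≠ Projectivization.mk ℝ w hw) :
    ∃ u : Fin 3 → ℝ, dot u w = 0 ∧ dot u v ≠ 0 := by
  by_contra hc
  push_neg at hc
  have key : ∀ k l : Fin 3, w k * v l = w l * v k := by
    intro k l
    have h0 : dot (Pi.single l (w k) - Pi.single k (w l)) w = 0 := by
      rw [dot_sub, dot_single, dot_single]; ring
    have h1 := hc _ h0
    rw [dot_sub, dot_single, dot_single] at h1
    linarith [h1]
  obtain ⟨k0, hk0⟩ : ∃ t, w t ≠ 0 := by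
    by_contra hcc; push_neg at hcc; exact hw (funext hcc)
  apply hne
  have hveq : v = (v k0 / w k0) • w := by
    funext l
    have h2 := key k0 l
    have : v l = w l * v k0 / w k0 := by
      field_simp
      linarith [h2]
    simp [this]
    ring
  rw [Projectivization.mk_eq_mk_iff']
  exact ⟨v k0 / w k0, hveq.symm⟩


lemma choose_identity (a b e : ℕ) :
    (a+b+e+2).choose (a+b+e) + (e+2).choose e
      = a*b + ((b+e+2).choose (b+e) + (a+e+2).choose (a+e)) := by
  have h2 : ∀ x : ℕ, 2 * ((x+2).choose x) = (x+2)*(x+1) := by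
    intro x
    rw [← Nat.choose_symm (by omega : x ≤ x + 2), show x+2-x = 2 from by omega,
      Nat.choose_two_right, show x+2-1 = x+1 from by omega]
    exact Nat.mul_div_cancel' (by rw [mul_comm]; exact (Nat.even_mul_succ_self (x+1)).two_dvd)
  apply Nat.eq_of_mul_eq_mul_left (show 0 < 2 by norm_num)
  rw [Nat.mul_add, Nat.mul_add, Nat.mul_add, h2, h2, h2, h2]
  ring


abbrev S (e : ℕ) : Submodule ℝ (MvPolynomial (Fin 3) ℝ) := MvPolynomial.homogeneousSubmodule (Fin 3) ℝ e

lemma core (f g : MvPolynomial (Fin 3) ℝ) (m n N : ℕ) (hm : 1 ≤ m) (hn : 1 ≤ n)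
    (hf : f.IsHomogeneous m) (hg : g.IsHomogeneous n)
    (hcop : IsRelPrime f g)
    (v : Fin N → (Fin 3 → ℝ)) (hv0 : ∀ i, v i ≠ 0)
    (hdist : ∀ i j, i ≠ j → Projectivization.mk ℝ (v i) (hv0 i) ≠ Projectivization.mk ℝ (v j) (hv0 j))
    (hvf : ∀ i, eval (v i) f = 0) (hvg : ∀ i, eval (v i) g = 0) :
    N ≤ m * n := by
  rcases Nat.eq_zero_or_pos N with hN | hN
  · omega
  -- f and g are nonzero
  have hunit : ∀ p : MvPolynomial (Fin 3) ℝ, ∀ k, 1 ≤ k → p.IsHomogeneous k → ¬ IsUnit p := by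
    intro p k hk hp hu
    obtain ⟨q, hq⟩ := isUnit_iff_exists_inv.1 hu
    have h1 : eval (0 : Fin 3 → ℝ) (p * q) = 1 := by rw [hq]; simp
    have h2 : eval (0 : Fin 3 → ℝ) p = 0 := by
      rw [MvPolynomial.eval_zero]
      exact hp.coeff_eq_zero (by simpa [Finsupp.degree] using (by omega : (0:ℕ) ≠ k))
    rw [map_mul, h2, zero_mul] at h1
    exact one_ne_zero h1.symm
  have hf0 : f ≠ 0 := by
    intro h
    exact hunit g n hn hg (hcop (show g ∣ f by rw [h]; exact dvd_zero g) dvd_rfl)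
  have hg0 : g ≠ 0 := by
    intro h
    exact hunit f m hm hf (hcop dvd_rfl (show f ∣ g by rw [h]; exact dvd_zero f))
  classical
  set d := m + n + N with hd
  set A : Submodule ℝ (MvPolynomial (Fin 3) ℝ) :=
    Submodule.map (LinearMap.mulLeft ℝ f) (S (n + N)) with hA
  set B : Submodule ℝ (MvPolynomial (Fin 3) ℝ) :=
    Submodule.map (LinearMap.mulLeft ℝ g) (S (m + N)) with hB
  have hA_le : A ≤ S d := by
    rintro x ⟨a, ha, rfl⟩
    have ha' : a.IsHomogeneous (n + N) := ha
    simp only [LinearMap.mulLeft_apply]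
    exact (mem_homogeneousSubmodule _ _).2 ((show (m + (n + N)) = d by omega) ▸ hf.mul ha')
  have hB_le : B ≤ S d := by
    rintro x ⟨b, hb, rfl⟩
    have hb' : b.IsHomogeneous (m + N) := hb
    simp only [LinearMap.mulLeft_apply]
    exact (mem_homogeneousSubmodule _ _).2 ((show (n + (m + N)) = d by omega) ▸ hg.mul hb')
  haveI : FiniteDimensional ℝ (S d) := inferInstance
  haveI hAfd : FiniteDimensional ℝ A := Submodule.finiteDimensional_of_le hA_le
  haveI hBfd : FiniteDimensional ℝ B := Submodule.finiteDimensional_of_le hB_le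
  have hinjf : Function.Injective (LinearMap.mulLeft ℝ f) := fun x y h => by
    simp only [LinearMap.mulLeft_apply] at h
    exact mul_left_cancel₀ hf0 h
  have hinjg : Function.Injective (LinearMap.mulLeft ℝ g) := fun x y h => by
    simp only [LinearMap.mulLeft_apply] at h
    exact mul_left_cancel₀ hg0 h
  have e5 : finrank ℝ A = (n + N + 2).choose (n + N) := by
    rw [← LinearEquiv.finrank_eq (Submodule.equivMapOfInjective _ hinjf (S (n + N))),
      finrank_homog]
  have e6 : finrank ℝ B = (m + N + 2).choose (m + N) := by
    rw [← LinearEquiv.finrank_eq (Submodule.equivMapOfInjective _ hinjg (S (m + N))),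
      finrank_homog]
  -- the intersection is contained in (g*f) * S N
  set Cgf : Submodule ℝ (MvPolynomial (Fin 3) ℝ) :=
    Submodule.map (LinearMap.mulLeft ℝ (g * f)) (S N) with hCgf
  have hABC : A ⊓ B ≤ Cgf := by
    rintro x ⟨⟨a, ha, hxa⟩, ⟨b, hb, hxb⟩⟩
    simp only [LinearMap.mulLeft_apply] at hxa hxb
    by_cases hx0 : x = 0
    · rw [hx0]; exact zero_mem _
    have hfb : f ∣ b := by
      refine IsRelPrime.dvd_of_dvd_mul_right hcop ⟨a, ?_⟩
      rw [mul_comm b g, hxb, ← hxa]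
    obtain ⟨c, rfl⟩ := hfb
    have hc0 : c ≠ 0 := by
      rintro rfl
      rw [mul_zero, mul_zero] at hxb
      exact hx0 hxb.symm
    have hb' : (f * c).IsHomogeneous (m + N) := hb
    have hcN : c.IsHomogeneous N := isHomogeneous_of_mul_left hf hb' hf0 hc0
    refine ⟨c, (mem_homogeneousSubmodule _ _).2 hcN, ?_⟩
    simp only [LinearMap.mulLeft_apply]
    rw [← hxb, mul_assoc]
  have hCgf_fd : FiniteDimensional ℝ Cgf := by
    refine Submodule.finiteDimensional_of_le (S₂ := S d) ?_
    rintro x ⟨c, hc, rfl⟩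
    have hc' : c.IsHomogeneous N := hc
    simp only [LinearMap.mulLeft_apply]
    exact (mem_homogeneousSubmodule _ _).2
      ((show (n + m + N) = d by omega) ▸ (hg.mul hf).mul hc')
  have e7 : finrank ℝ (A ⊓ B : Submodule ℝ (MvPolynomial (Fin 3) ℝ)) ≤ (N + 2).choose N := by
    calc finrank ℝ (A ⊓ B : Submodule ℝ (MvPolynomial (Fin 3) ℝ)) ≤ finrank ℝ Cgf :=
          Submodule.finrank_mono hABC
    _ ≤ finrank ℝ (S N) := Submodule.finrank_map_le _ _
    _ = (N + 2).choose N := finrank_homog N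
  -- separating linear forms
  have hU : ∀ i j : Fin N, ∃ u : Fin 3 → ℝ,
      i ≠ j → (dot u (v j) = 0 ∧ dot u (v i) ≠ 0) := by
    intro i j
    by_cases h : i = j
    · exact ⟨0, fun hne => absurd h hne⟩
    · obtain ⟨u, h1, h2⟩ := sep (hv0 i) (hv0 j) (hdist i j h)
      exact ⟨u, fun _ => ⟨h1, h2⟩⟩
  choose u hu using hU
  set F : Fin N → MvPolynomial (Fin 3) ℝ := fun i =>
    (∏ j ∈ Finset.univ.erase i, linf (u i j)) * (linf (v i)) ^ (m + n + 1) with hF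
  have hFdeg : ∀ i, F i ∈ S d := by
    intro i
    have h1 := (IsHomogeneous.prod (Finset.univ.erase i) (fun j => linf (u i j))
      (fun _ => 1) (fun j _ => linf_isHomogeneous _)).mul
      ((linf_isHomogeneous (v i)).pow (m + n + 1))
    refine (mem_homogeneousSubmodule _ _).2 ?_
    have harr : (∑ _j ∈ Finset.univ.erase i, 1) + 1 * (m + n + 1) = d := by
      rw [Finset.sum_const, Finset.card_erase_of_mem (Finset.mem_univ i),
        Finset.card_univ, Fintype.card_fin]
      simp only [smul_eq_mul, mul_one]
      omega
    exact harr ▸ h1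
  have hevalF : ∀ k i, eval (v k) (F i)
      = (∏ j ∈ Finset.univ.erase i, dot (u i j) (v k)) * (dot (v i) (v k)) ^ (m + n + 1) := by
    intro k i
    rw [hF]
    simp only [map_mul, map_pow, map_prod, eval_linf]
  have hevalF_self : ∀ i, eval (v i) (F i) ≠ 0 := by
    intro i
    rw [hevalF]
    refine mul_ne_zero (Finset.prod_ne_zero_iff.2 fun j hj => ?_)
      (pow_ne_zero _ (ne_of_gt (dot_self_pos (hv0 i))))
    exact (hu i j (Finset.ne_of_mem_erase hj).symm).2
  have hevalF_ne : ∀ k i, k ≠ i → eval (v k) (F i) = 0 := by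
    intro k i hki
    rw [hevalF]
    rw [Finset.prod_eq_zero (Finset.mem_erase.2 ⟨hki, Finset.mem_univ k⟩)
      (hu i k (Ne.symm hki)).1, zero_mul]
  -- elements of A ⊔ B vanish at all the points
  have hWeval : ∀ x ∈ A ⊔ B, ∀ k, eval (v k) x = 0 := by
    intro x hx k
    obtain ⟨y, hy, z, hz, rfl⟩ := Submodule.mem_sup.1 hx
    obtain ⟨a, _, rfl⟩ := hy
    obtain ⟨b, _, rfl⟩ := hz
    simp only [LinearMap.mulLeft_apply, map_add, map_mul, hvf k, hvg k, zero_mul, add_zero]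
  -- key computation: coefficients of a combination of the F i vanishing at all points
  have hcoeff : ∀ (c : Fin N → ℝ) (x : MvPolynomial (Fin 3) ℝ), (∑ i, c i • F i) = x →
      (∀ k, eval (v k) x = 0) → ∀ k, c k = 0 := by
    intro c x hsum hev k
    have h1 : eval (v k) (∑ i, c i • F i) = c k * eval (v k) (F k) := by
      rw [map_sum, Finset.sum_eq_single k]
      · rw [smul_eq_C_mul, map_mul, eval_C]
      · intro i _ hik
        rw [smul_eq_C_mul, map_mul, eval_C, hevalF_ne k i (Ne.symm hik), mul_zero]
      · intro h; exact absurd (Finset.mem_univ k) h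
    rw [hsum, hev k] at h1
    exact (mul_eq_zero.1 h1.symm).resolve_right (hevalF_self k)
  set T : Submodule ℝ (MvPolynomial (Fin 3) ℝ) := Submodule.span ℝ (Set.range F) with hT
  have hT_le : T ≤ S d := Submodule.span_le.2 (by rintro _ ⟨i, rfl⟩; exact hFdeg i)
  haveI hTfd : FiniteDimensional ℝ T := Submodule.finiteDimensional_of_le hT_le
  have hFli : LinearIndependent ℝ F := by
    rw [Fintype.linearIndependent_iff]
    intro c hc
    exact hcoeff c 0 hc (fun k => map_zero _)
  have e8 : finrank ℝ T = N := by
    rw [hT, finrank_span_eq_card hFli, Fintype.card_fin]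
  have hWT : (A ⊔ B) ⊓ T = ⊥ := by
    rw [eq_bot_iff]
    rintro x ⟨hxW, hxT⟩
    obtain ⟨c, hc⟩ := (Submodule.mem_span_range_iff_exists_fun ℝ).1 hxT
    have hc0 : ∀ k, c k = 0 := hcoeff c x hc (hWeval x hxW)
    have hx0 : x = 0 := by
      rw [← hc]
      exact Finset.sum_eq_zero fun i _ => by rw [hc0 i, zero_smul]
    simp [hx0]
  -- the final dimension count
  have q1 : finrank ℝ ((A ⊔ B) ⊔ T : Submodule ℝ (MvPolynomial (Fin 3) ℝ))
        + finrank ℝ ((A ⊔ B) ⊓ T : Submodule ℝ (MvPolynomial (Fin 3) ℝ))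
      = finrank ℝ (A ⊔ B : Submodule ℝ (MvPolynomial (Fin 3) ℝ)) + finrank ℝ T :=
    Submodule.finrank_sup_add_finrank_inf_eq _ _
  have q2 : finrank ℝ ((A ⊔ B) ⊓ T : Submodule ℝ (MvPolynomial (Fin 3) ℝ)) = 0 := by
    rw [hWT]
    exact finrank_bot ℝ _
  have q3 : finrank ℝ ((A ⊔ B) ⊔ T : Submodule ℝ (MvPolynomial (Fin 3) ℝ))
      ≤ (d + 2).choose d := by
    rw [← finrank_homog d]
    exact Submodule.finrank_mono (sup_le (sup_le hA_le hB_le) hT_le)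
  have q4 : finrank ℝ (A ⊔ B : Submodule ℝ (MvPolynomial (Fin 3) ℝ))
        + finrank ℝ (A ⊓ B : Submodule ℝ (MvPolynomial (Fin 3) ℝ))
      = finrank ℝ A + finrank ℝ B :=
    Submodule.finrank_sup_add_finrank_inf_eq _ _
  have q5 := choose_identity m n N
  rw [show m + n + N = d from rfl] at q5
  omega


end BezoutAux
end

/-- Bezout's theorem for real projective plane curves: if `f` and `g` are
homogeneous of degrees `m ≥ 1` and `n ≥ 1` over ℝ with no common nonconstant
factor, then their set of common zeros in the real projective plane is finite,
of cardinality at most `m * n`. -/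
theorem bezout_real_projective_plane
    (f g : MvPolynomial (Fin 3) ℝ) (m n : ℕ) (hm : 1 ≤ m) (hn : 1 ≤ n)
    (hf : f.IsHomogeneous m) (hg : g.IsHomogeneous n)
    (hcop : ∀ h : MvPolynomial (Fin 3) ℝ, h ∣ f → h ∣ g → IsUnit h) :
    {p : Projectivization ℝ (Fin 3 → ℝ) | ProjVanish f p ∧ ProjVanish g p}.Finite ∧
    {p : Projectivization ℝ (Fin 3 → ℝ) | ProjVanish f p ∧ ProjVanish g p}.ncard ≤ m * n := by
  set Z := {p : Projectivization ℝ (Fin 3 → ℝ) | ProjVanish f p ∧ ProjVanish g p} with hZ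
  have hrel : IsRelPrime f g := fun c hc hc' => hcop c hc hc'
  have key : ∀ s : Finset (Projectivization ℝ (Fin 3 → ℝ)), ↑s ⊆ Z → s.card ≤ m * n := by
    intro s hs
    set pts : Fin s.card → Projectivization ℝ (Fin 3 → ℝ) :=
      fun i => (s.equivFin.symm i : Projectivization ℝ (Fin 3 → ℝ)) with hpts
    have hptsZ : ∀ i, pts i ∈ Z := fun i => hs (s.equivFin.symm i).2
    have hptsinj : Function.Injective pts :=
      Subtype.val_injective.comp s.equivFin.symm.injective
    set v : Fin s.card → (Fin 3 → ℝ) := fun i => (pts i).rep with hv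
    have hv0 : ∀ i, v i ≠ 0 := fun i => (pts i).rep_nonzero
    refine BezoutAux.core f g m n s.card hm hn hf hg hrel v hv0 ?_ ?_ ?_
    · intro i j hij hmk
      apply hij
      apply hptsinj
      rw [← Projectivization.mk_rep (pts i), ← Projectivization.mk_rep (pts j)]
      exact hmk
    · intro i
      exact (hptsZ i).1 (v i) (hv0 i) (Projectivization.mk_rep (pts i))
    · intro i
      exact (hptsZ i).2 (v i) (hv0 i) (Projectivization.mk_rep (pts i))
  have hfin : Z.Finite := by
    by_contra hinf
    obtain ⟨t, hts, htc⟩ := (Set.Infinite.exists_subset_card_eq hinf (m * n + 1))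
    have := key t hts
    omega
  refine ⟨hfin, ?_⟩
  rw [Set.ncard_eq_toFinset_card Z hfin]
  exact key hfin.toFinset (by simp)
end
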